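/- Fix λ > 0, γ > 0, and p a probability distribution on ℝ^d with bounded support. Let W* be the unique positive definite solution of E_{x∼p}[(W x xᵀ W)/(1 + γ‖W x‖)] + λW = I. Then for every θ ∈ ℝ^d: E_{x∼p}|⟨x, θ⟩| ≤ (1 + √d·γ)·‖(W*)⁻¹ θ‖. -/

import Mathlib

open MeasureTheory Matrix
open scoped Classical

/-- Euclidean norm on `Fin d → ℝ`. -/
noncomputable def enorm' {d : ℕ} (v : Fin d → ℝ) : ℝ := Real.sqrt (∑ i, (v i)^2)

/-- Euclidean inner product on `Fin d → ℝ`. -/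
noncomputable def einner' {d : ℕ} (v w : Fin d → ℝ) : ℝ := ∑ i, v i * w i

/-- Operator (spectral) norm of a real matrix. -/
noncomputable def opNorm {d : ℕ} (M : Matrix (Fin d) (Fin d) ℝ) : ℝ :=
  ‖(Matrix.toEuclideanCLM (𝕜 := ℝ) M :
      EuclideanSpace ℝ (Fin d) →L[ℝ] EuclideanSpace ℝ (Fin d))‖

/-- Positive semidefinite square root (junk value `0` on non-PSD matrices). -/
noncomputable def psqrt {d : ℕ} (A : Matrix (Fin d) (Fin d) ℝ) : Matrix (Fin d) (Fin d) ℝ :=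
  if h : A.PosSemidef then
    (h.1.eigenvectorUnitary : Matrix (Fin d) (Fin d) ℝ) *
      diagonal (fun i => Real.sqrt (h.1.eigenvalues i)) *
      (star (h.1.eigenvectorUnitary : Matrix (Fin d) (Fin d) ℝ))
  else 0

/-- Entrywise expectation of a matrix-valued function. -/
noncomputable def mExp {d : ℕ} (p : Measure (Fin d → ℝ))
    (f : (Fin d → ℝ) → Matrix (Fin d) (Fin d) ℝ) : Matrix (Fin d) (Fin d) ℝ :=
  Matrix.of fun i j => ∫ x, f x i j ∂p

/-- The LDP operator `F(U) = E[(U x xᵀ U)/‖U x‖ · 1{x ≠ 0}] + λ U`. -/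
noncomputable def FLDP {d : ℕ} (p : Measure (Fin d → ℝ)) (lam : ℝ)
    (U : Matrix (Fin d) (Fin d) ℝ) : Matrix (Fin d) (Fin d) ℝ :=
  mExp p (fun x => if x = 0 then 0
    else (enorm' (U.mulVec x))⁻¹ • vecMulVec (U.mulVec x) (U.mulVec x)) + lam • U

/-- The DP operator `G(W) = E[(W x xᵀ W)/(1 + γ‖W x‖)] + λ W`. -/
noncomputable def FJDP {d : ℕ} (p : Measure (Fin d → ℝ)) (γ lam : ℝ)
    (W : Matrix (Fin d) (Fin d) ℝ) : Matrix (Fin d) (Fin d) ℝ :=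
  mExp p (fun x => (1 + γ * enorm' (W.mulVec x))⁻¹ • vecMulVec (W.mulVec x) (W.mulVec x))
    + lam • W

/-- `sym(A) = (Aᵀ A)^{1/2}`. -/
noncomputable def symMat {d : ℕ} (A : Matrix (Fin d) (Fin d) ℝ) : Matrix (Fin d) (Fin d) ℝ :=
  psqrt (Aᵀ * A)

/-- Smallest eigenvalue of a Hermitian matrix (junk value `0` otherwise). -/
noncomputable def lmin {d : ℕ} (A : Matrix (Fin d) (Fin d) ℝ) : ℝ :=
  if h : A.IsHermitian then ⨅ i, h.eigenvalues i else 0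

/-- Largest eigenvalue of a Hermitian matrix (junk value `0` otherwise). -/
noncomputable def lmax {d : ℕ} (A : Matrix (Fin d) (Fin d) ℝ) : ℝ :=
  if h : A.IsHermitian then ⨆ i, h.eigenvalues i else 0

/-!
Write `D x = 1 + γ ‖W x‖` for `W = W*`. Testing the fixed-point equation against `w wᵀ` gives
`E[⟨W x, w⟩² / D] ≤ ‖w‖²`, because `λ ⟨w, W w⟩ ≥ 0`; summing over a basis, `E[‖W x‖² / D] ≤ d`.
Cauchy–Schwarz then gives `s := E‖W x‖ ≤ √d · t` with `t := √(E D) = √(1 + γ s)`, so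
`t² ≤ 1 + √d γ t` and hence `t ≤ 1 + √d γ`. Finally `⟨x, θ⟩ = ⟨W x, W⁻¹ θ⟩` as `W` is symmetric,
and Cauchy–Schwarz once more bounds `E|⟨x, θ⟩|` by
`√(E[⟨W x, W⁻¹ θ⟩² / D]) · t ≤ ‖W⁻¹ θ‖ (1 + √d γ)`.
-/

theorem le_one_add_of_sq_le_one_add_mul {a t : ℝ} (ha : 0 ≤ a) (ht : t ^ 2 ≤ 1 + a * t) :
    t ≤ 1 + a := by
  nlinarith

section CauchySchwarz

variable {α : Type*} [MeasurableSpace α] {μ : Measure α}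

theorem integral_mul_le_sqrt_mul_sqrt {f g : α → ℝ} (hf0 : 0 ≤ f) (hg0 : 0 ≤ g)
    (hf : MemLp f 2 μ) (hg : MemLp g 2 μ) :
    ∫ x, f x * g x ∂μ ≤ √(∫ x, f x ^ 2 ∂μ) * √(∫ x, g x ^ 2 ∂μ) := by
  have h := integral_mul_le_Lp_mul_Lq_of_nonneg Real.HolderConjugate.two_two
    (.of_forall hf0) (.of_forall hg0) (by norm_num; exact hf) (by norm_num; exact hg)
  norm_num [Real.sqrt_eq_rpow] at h ⊢
  exact h

theorem integral_abs_le_sqrt_mul_sqrt {f D : α → ℝ} (hD : ∀ x, 0 < D x)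
    (hf : AEMeasurable f μ) (hfD : Integrable (fun x => f x ^ 2 / D x) μ)
    (hDi : Integrable D μ) :
    ∫ x, |f x| ∂μ ≤ √(∫ x, f x ^ 2 / D x ∂μ) * √(∫ x, D x ∂μ) := by
  have hsqrtD : AEMeasurable (fun x => √(D x)) μ := hDi.aemeasurable.sqrt
  have hfirst : MemLp (fun x => |f x| / √(D x)) 2 μ := by
    refine (memLp_two_iff_integrable_sq (hf.abs.div hsqrtD).aestronglyMeasurable).2
      (hfD.congr (.of_forall fun x => ?_))
    simp [div_pow, Real.sq_sqrt (hD x).le]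
  have hsecond : MemLp (fun x => √(D x)) 2 μ := by
    refine (memLp_two_iff_integrable_sq hsqrtD.aestronglyMeasurable).2
      (hDi.congr (.of_forall fun x => ?_))
    simp [Real.sq_sqrt (hD x).le]
  have h := integral_mul_le_sqrt_mul_sqrt (fun x => by positivity) (fun x => by positivity)
    hfirst hsecond
  simp only [div_pow, sq_abs, Real.sq_sqrt (hD _).le] at h
  simpa only [div_mul_cancel₀ _ (Real.sqrt_pos.2 (hD _)).ne'] using h

theorem sqrt_integral_one_add_mul_le [IsProbabilityMeasure μ] {n : α → ℝ} {γ c : ℝ}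
    (hn0 : 0 ≤ n) (hγ : 0 ≤ γ) (hn : Integrable n μ)
    (hnD : Integrable (fun x => n x ^ 2 / (1 + γ * n x)) μ)
    (hc : √(∫ x, n x ^ 2 / (1 + γ * n x) ∂μ) ≤ c) :
    √(∫ x, 1 + γ * n x ∂μ) ≤ 1 + c * γ := by
  have hD : ∀ x, 0 < 1 + γ * n x := fun x => by nlinarith [hn0 x, mul_nonneg hγ (hn0 x)]
  have hDi : Integrable (fun x => 1 + γ * n x) μ := (integrable_const 1).add (hn.const_mul γ)
  have hs : ∫ x, 1 + γ * n x ∂μ = 1 + γ * ∫ x, n x ∂μ := by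
    rw [integral_add (integrable_const 1) (hn.const_mul γ), integral_const_mul]
    simp
  set t := √(∫ x, 1 + γ * n x ∂μ)
  have hcs : ∫ x, n x ∂μ ≤ c * t := by
    calc ∫ x, n x ∂μ = ∫ x, |n x| ∂μ := by simp only [abs_of_nonneg (hn0 _)]
      _ ≤ _ := integral_abs_le_sqrt_mul_sqrt hD hn.aemeasurable hnD hDi
      _ ≤ c * t := by gcongr
  have hc0 : 0 ≤ c := (Real.sqrt_nonneg _).trans hc
  refine le_one_add_of_sq_le_one_add_mul (mul_nonneg hc0 hγ) ?_
  rw [Real.sq_sqrt (integral_nonneg fun x => (hD x).le), hs]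
  nlinarith

end CauchySchwarz

theorem Continuous.integrable_of_ae_mem_isCompact {X E : Type*} [TopologicalSpace X]
    [T2Space X] [MeasurableSpace X] [OpensMeasurableSpace X] [NormedAddCommGroup E]
    {μ : Measure X} [IsFiniteMeasureOnCompacts μ] {f : X → E} {K : Set X} (hf : Continuous f)
    (hK : IsCompact K) (hμK : ∀ᵐ x ∂μ, x ∈ K) : Integrable f μ := by
  rw [← Measure.restrict_eq_self_of_ae_mem hμK]
  exact hf.continuousOn.integrableOn_compact hK

@[fun_prop]
theorem continuous_enorm' {d : ℕ} : Continuous (enorm' : (Fin d → ℝ) → ℝ) := by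
  unfold enorm'; fun_prop

theorem enorm'_nonneg {d : ℕ} (v : Fin d → ℝ) : 0 ≤ enorm' v := Real.sqrt_nonneg _

theorem one_add_mul_enorm'_pos {d : ℕ} {γ : ℝ} (hγ : 0 ≤ γ) (v : Fin d → ℝ) :
    0 < 1 + γ * enorm' v := by
  have := enorm'_nonneg v; positivity

theorem isCompact_setOf_enorm'_le {d : ℕ} (R : ℝ) : IsCompact {x : Fin d → ℝ | enorm' x ≤ R} := by
  have h : {x : Fin d → ℝ | enorm' x ≤ R} =
      WithLp.ofLp '' Metric.closedBall (0 : EuclideanSpace ℝ (Fin d)) R := by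
    ext x
    exact ⟨fun hx => ⟨WithLp.toLp 2 x, by simpa [EuclideanSpace.norm_eq, enorm'] using hx, rfl⟩,
      by rintro ⟨y, hy, rfl⟩; simpa [EuclideanSpace.norm_eq, enorm'] using hy⟩
  rw [h]
  exact (isCompact_closedBall _ _).image (PiLp.continuous_ofLp 2 _)

theorem enorm'_eq_sqrt_dotProduct_self {d : ℕ} (v : Fin d → ℝ) : enorm' v = √(v ⬝ᵥ v) := by
  simp [enorm', dotProduct, sq]

theorem einner'_eq_mulVec_dotProduct_inv_mulVec {d : ℕ} {W : Matrix (Fin d) (Fin d) ℝ}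
    (hW : Wᵀ = W) (hdet : IsUnit W.det) (x θ : Fin d → ℝ) :
    einner' x θ = (W *ᵥ x) ⬝ᵥ (W⁻¹ *ᵥ θ) := by
  rw [← hW, mulVec_transpose, ← dotProduct_mulVec, hW, mulVec_mulVec, mul_nonsing_inv _ hdet,
    one_mulVec]
  rfl

theorem dotProduct_mExp_mulVec {d : ℕ} (p : Measure (Fin d → ℝ))
    {f : (Fin d → ℝ) → Matrix (Fin d) (Fin d) ℝ} (hf : ∀ i j, Integrable (fun x => f x i j) p)
    (v w : Fin d → ℝ) : v ⬝ᵥ mExp p f *ᵥ w = ∫ x, v ⬝ᵥ f x *ᵥ w ∂p := by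
  simp only [dotProduct, mulVec, mExp, of_apply, Finset.mul_sum]
  rw [integral_finsetSum _ fun i _ =>
    integrable_finsetSum _ fun j _ => ((hf i j).mul_const _).const_mul _]
  refine Finset.sum_congr rfl fun i _ => ?_
  rw [integral_finsetSum _ fun j _ => ((hf i j).mul_const _).const_mul _]
  refine Finset.sum_congr rfl fun j _ => ?_
  rw [integral_const_mul, integral_mul_const]

theorem dotProduct_smul_vecMulVec_mulVec {d : ℕ} (c : ℝ) (a w : Fin d → ℝ) :
    w ⬝ᵥ (c • vecMulVec a a) *ᵥ w = c * (a ⬝ᵥ w) ^ 2 := by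
  rw [smul_mulVec, vecMulVec_mulVec]
  simp [dotProduct_comm w a, sq]

section FixedPoint

variable {d : ℕ} {p : Measure (Fin d → ℝ)} [IsFiniteMeasure p] {K : Set (Fin d → ℝ)}
  {γ lam : ℝ} {W : Matrix (Fin d) (Fin d) ℝ}

theorem dotProduct_FJDP_mulVec (hK : IsCompact K) (hpK : ∀ᵐ x ∂p, x ∈ K) (hγ : 0 ≤ γ)
    (w : Fin d → ℝ) :
    w ⬝ᵥ FJDP p γ lam W *ᵥ w =
      ∫ x, ((W *ᵥ x) ⬝ᵥ w) ^ 2 / (1 + γ * enorm' (W *ᵥ x)) ∂p + lam * (w ⬝ᵥ W *ᵥ w) := by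
  have hint : ∀ i j, Integrable
      (fun x => ((1 + γ * enorm' (W *ᵥ x))⁻¹ • vecMulVec (W *ᵥ x) (W *ᵥ x)) i j) p := by
    intro i j
    refine Continuous.integrable_of_ae_mem_isCompact ?_ hK hpK
    simp only [Matrix.smul_apply, vecMulVec_apply]
    fun_prop (disch := exact fun x => (one_add_mul_enorm'_pos hγ _).ne')
  rw [FJDP, add_mulVec, dotProduct_add, dotProduct_mExp_mulVec p hint, smul_mulVec,
    dotProduct_smul, smul_eq_mul]
  simp only [dotProduct_smul_vecMulVec_mulVec, inv_mul_eq_div]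

theorem integral_sq_dotProduct_div_le_of_FJDP_eq_one (hK : IsCompact K) (hpK : ∀ᵐ x ∂p, x ∈ K)
    (hγ : 0 ≤ γ) (hlam : 0 ≤ lam) (hW : W.PosSemidef) (hfix : FJDP p γ lam W = 1)
    (w : Fin d → ℝ) :
    ∫ x, ((W *ᵥ x) ⬝ᵥ w) ^ 2 / (1 + γ * enorm' (W *ᵥ x)) ∂p ≤ w ⬝ᵥ w := by
  have hform := dotProduct_FJDP_mulVec (lam := lam) (W := W) hK hpK hγ w
  rw [hfix, one_mulVec] at hform
  have hWw : 0 ≤ w ⬝ᵥ W *ᵥ w := by simpa using hW.re_dotProduct_nonneg w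
  nlinarith [mul_nonneg hlam hWw]

theorem integral_enorm'_sq_div_le_of_FJDP_eq_one (hK : IsCompact K) (hpK : ∀ᵐ x ∂p, x ∈ K)
    (hγ : 0 ≤ γ) (hlam : 0 ≤ lam) (hW : W.PosSemidef) (hfix : FJDP p γ lam W = 1) :
    ∫ x, enorm' (W *ᵥ x) ^ 2 / (1 + γ * enorm' (W *ᵥ x)) ∂p ≤ (d : ℝ) := by
  have hint : ∀ i, Integrable
      (fun x => ((W *ᵥ x) ⬝ᵥ Pi.single i 1) ^ 2 / (1 + γ * enorm' (W *ᵥ x))) p := fun i =>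
    Continuous.integrable_of_ae_mem_isCompact
      (by fun_prop (disch := exact fun x => (one_add_mul_enorm'_pos hγ _).ne')) hK hpK
  calc ∫ x, enorm' (W *ᵥ x) ^ 2 / (1 + γ * enorm' (W *ᵥ x)) ∂p
      = ∑ i, ∫ x, ((W *ᵥ x) ⬝ᵥ Pi.single i 1) ^ 2 / (1 + γ * enorm' (W *ᵥ x)) ∂p := by
        rw [← integral_finsetSum _ fun i _ => hint i]
        refine integral_congr_ae (.of_forall fun x => ?_)
        simp only [← Finset.sum_div, dotProduct_single, mul_one, enorm',
          Real.sq_sqrt (Finset.sum_nonneg fun i _ => sq_nonneg _)]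
    _ ≤ ∑ i : Fin d, (Pi.single i 1 ⬝ᵥ Pi.single i 1 : ℝ) := Finset.sum_le_sum fun i _ =>
        integral_sq_dotProduct_div_le_of_FJDP_eq_one hK hpK hγ hlam hW hfix _
    _ = d := by simp [dotProduct_single]

end FixedPoint

theorem stmt8_general {d : ℕ} (p : Measure (Fin d → ℝ)) [IsProbabilityMeasure p]
    (hbdd : ∃ R : ℝ, ∀ᵐ x ∂p, enorm' x ≤ R)
    (lam γ : ℝ) (hlam : 0 < lam) (hγ : 0 < γ)
    (Wstar : Matrix (Fin d) (Fin d) ℝ) (hWpd : Wstar.PosDef)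
    (hfix : FJDP p γ lam Wstar = 1)
    (θ : Fin d → ℝ) :
    (∫ x, |einner' x θ| ∂p) ≤ (1 + Real.sqrt d * γ) * enorm' (Wstar⁻¹.mulVec θ) := by
  obtain ⟨R, hR⟩ := hbdd
  have hK := isCompact_setOf_enorm'_le (d := d) R
  have hD : ∀ x, 0 < 1 + γ * enorm' (Wstar *ᵥ x) := fun x => one_add_mul_enorm'_pos hγ.le _
  have hsymm : Wstarᵀ = Wstar := by
    simpa [conjTranspose_eq_transpose_of_trivial] using hWpd.isHermitian.eq
  have hdet : IsUnit Wstar.det := (isUnit_iff_isUnit_det _).1 hWpd.isUnit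
  set u := Wstar⁻¹ *ᵥ θ
  have hint : ∀ f : (Fin d → ℝ) → ℝ, Continuous f → Integrable f p := fun f hf =>
    hf.integrable_of_ae_mem_isCompact hK hR
  have hweight : √(∫ x, 1 + γ * enorm' (Wstar *ᵥ x) ∂p) ≤ 1 + √d * γ :=
    sqrt_integral_one_add_mul_le (fun x => enorm'_nonneg _) hγ.le (hint _ (by fun_prop))
      (hint _ (by fun_prop (disch := exact fun x => (hD x).ne')))
      (Real.sqrt_le_sqrt (integral_enorm'_sq_div_le_of_FJDP_eq_one hK hR hγ.le hlam.le
        hWpd.posSemidef hfix))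
  calc ∫ x, |einner' x θ| ∂p = ∫ x, |(Wstar *ᵥ x) ⬝ᵥ u| ∂p := by
        simp only [einner'_eq_mulVec_dotProduct_inv_mulVec hsymm hdet, u]
    _ ≤ √(∫ x, ((Wstar *ᵥ x) ⬝ᵥ u) ^ 2 / (1 + γ * enorm' (Wstar *ᵥ x)) ∂p) *
          √(∫ x, 1 + γ * enorm' (Wstar *ᵥ x) ∂p) :=
        integral_abs_le_sqrt_mul_sqrt hD (by fun_prop)
          (hint _ (by fun_prop (disch := exact fun x => (hD x).ne'))) (hint _ (by fun_prop))
    _ ≤ enorm' u * (1 + √d * γ) := by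
        rw [enorm'_eq_sqrt_dotProduct_self]
        gcongr
        exact integral_sq_dotProduct_div_le_of_FJDP_eq_one hK hR hγ.le hlam.le
          hWpd.posSemidef hfix u
    _ = (1 + √d * γ) * enorm' u := mul_comm _ _

/-- For the solution `W*` of `FJDP(W) = I`,
`E|⟨x,θ⟩| ≤ (1 + √d·γ)‖(W*)⁻¹ θ‖`. -/
theorem stmt8 {d : ℕ} (p : Measure (Fin d → ℝ)) [IsProbabilityMeasure p]
    (hbdd : ∃ R : ℝ, ∀ᵐ x ∂p, enorm' x ≤ R)
    (lam γ : ℝ) (hlam : 0 < lam) (hγ : 0 < γ)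
    (Wstar : Matrix (Fin d) (Fin d) ℝ) (hWpd : Wstar.PosDef)
    (hfix : FJDP p γ lam Wstar = 1)
    (huniq : ∀ W : Matrix (Fin d) (Fin d) ℝ, W.PosDef → FJDP p γ lam W = 1 → W = Wstar)
    (θ : Fin d → ℝ) :
    (∫ x, |einner' x θ| ∂p) ≤ (1 + Real.sqrt d * γ) * enorm' (Wstar⁻¹.mulVec θ) :=
  stmt8_general p hbdd lam γ hlam hγ Wstar hWpd hfix θ
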